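/- The Gaussian kernel P^λ satisfies the Chapman–Kolmogorov identity: for s < τ < t and z, y ∈ ℝ^{2d}, ∫_{ℝ^{2d}} P^λ(s,z;τ,η) P^λ(τ,η;t,y) dη = P^λ(s,z;t,y). -/

import Mathlib

open Matrix MeasureTheory Real

/-- The `2d×2d` block matrix `B = [[0, I],[0, 0]]`. -/
def Bmat (d : ℕ) : Matrix (Fin d ⊕ Fin d) (Fin d ⊕ Fin d) ℝ :=
  Matrix.fromBlocks 0 1 0 0

/-- The matrix exponential `e^{τB} = I + τB` (since `B² = 0`). -/
noncomputable def expB (d : ℕ) (τ : ℝ) : Matrix (Fin d ⊕ Fin d) (Fin d ⊕ Fin d) ℝ :=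
  1 + τ • Bmat d

/-- The covariance matrix `C_λ(t) = λ·[[t³/3·I, t²/2·I],[t²/2·I, t·I]]`. -/
noncomputable def Cmat (d : ℕ) (lam t : ℝ) : Matrix (Fin d ⊕ Fin d) (Fin d ⊕ Fin d) ℝ :=
  lam • Matrix.fromBlocks ((t ^ 3 / 3) • 1) ((t ^ 2 / 2) • 1) ((t ^ 2 / 2) • 1) (t • 1)

/-- The Gaussian kernel
`P^λ(s,z;t,y) = ((2π)^{2d} det C_λ(t-s))^{-1/2}
  exp(-(1/2)(y - e^{(t-s)B}z)ᵀ C_λ(t-s)⁻¹ (y - e^{(t-s)B}z))`. -/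
noncomputable def ker (d : ℕ) (lam s t : ℝ) (z y : Fin d ⊕ Fin d → ℝ) : ℝ :=
  (Real.sqrt ((2 * Real.pi) ^ (2 * d) * (Cmat d lam (t - s)).det))⁻¹ *
    Real.exp (-(1 / 2) *
      ((y - expB d (t - s) *ᵥ z) ⬝ᵥ (Cmat d lam (t - s))⁻¹ *ᵥ (y - expB d (t - s) *ᵥ z)))


section General

variable {ι : Type*} [Fintype ι] [DecidableEq ι]

lemma integral_comp_mulVec (M : Matrix ι ι ℝ) (hM : M.det ≠ 0) (f : (ι → ℝ) → ℝ)
    (hf : Continuous f) :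
    ∫ x : ι → ℝ, f (M *ᵥ x) = |M.det|⁻¹ * ∫ y, f y := by
  have h1 : Measure.map (Matrix.toLin' M) volume
      = ENNReal.ofReal |M.det⁻¹| • volume := Real.map_matrix_volume_pi_eq_smul_volume_pi hM
  have h2 : ∫ x : ι → ℝ, f (M *ᵥ x) = ∫ y, f y ∂(Measure.map (Matrix.toLin' M) volume) := by
    rw [integral_map]
    · simp [Matrix.toLin'_apply]
    · exact ((Matrix.toLin' M : (ι → ℝ) →ₗ[ℝ] (ι → ℝ)).continuous_of_finiteDimensional).aemeasurable
    · exact hf.aestronglyMeasurable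
  rw [h2, h1, integral_smul_measure, ENNReal.toReal_ofReal (abs_nonneg _)]
  simp [abs_inv]

lemma continuous_quad (M : Matrix ι ι ℝ) : Continuous fun x : ι → ℝ => x ⬝ᵥ M *ᵥ x := by
  simp only [dotProduct, Matrix.mulVec]
  exact continuous_finset_sum _ fun i _ => (continuous_apply i).mul
    (continuous_finset_sum _ fun j _ => continuous_const.mul (continuous_apply j))

open scoped MatrixOrder in
lemma integral_gaussian_posdef (P : Matrix ι ι ℝ) (hP : P.PosDef) :
    ∫ x : ι → ℝ, Real.exp (-(1/2) * (x ⬝ᵥ P *ᵥ x)) =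
      Real.sqrt ((2 * π) ^ (Fintype.card ι) / P.det) := by
  have hsd := hP.posSemidef
  set S := CFC.sqrt P with hSdef
  have hSS : S * S = P := CFC.sqrt_mul_sqrt_self P hsd.nonneg
  have hSt : Sᵀ = S := by
    have := (CFC.sqrt_nonneg P).posSemidef.isHermitian
    exact (Matrix.isHermitian_iff_isSymm.mp this).eq
  have hdet2 : S.det ^ 2 = P.det := by
    rw [← hSS, Matrix.det_mul, sq]
  have hdS : S.det ≠ 0 := by
    intro h
    have h2 := hP.det_pos
    rw [← hdet2, h] at h2; simpa using h2
  have hquad : ∀ x : ι → ℝ, x ⬝ᵥ P *ᵥ x = (S *ᵥ x) ⬝ᵥ (S *ᵥ x) := by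
    intro x
    rw [← hSS, ← Matrix.mulVec_mulVec, Matrix.dotProduct_mulVec, ← Matrix.mulVec_transpose, hSt]
  have hcont : Continuous fun y : ι → ℝ => Real.exp (-(1/2) * (y ⬝ᵥ y)) := by
    exact Real.continuous_exp.comp (continuous_const.mul
      (continuous_finset_sum _ fun i _ => (continuous_apply i).mul (continuous_apply i)))
  calc ∫ x : ι → ℝ, Real.exp (-(1/2) * (x ⬝ᵥ P *ᵥ x))
      = ∫ x : ι → ℝ, (fun y => Real.exp (-(1/2) * (y ⬝ᵥ y))) (S *ᵥ x) := by
        simp_rw [hquad]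
    _ = |S.det|⁻¹ * ∫ y : ι → ℝ, Real.exp (-(1/2) * (y ⬝ᵥ y)) :=
        integral_comp_mulVec S hdS _ hcont
    _ = |S.det|⁻¹ * ∫ y : ι → ℝ, ∏ i, Real.exp (-(1/2) * (y i)^2) := by
        congr 1; apply integral_congr_ae; filter_upwards with y
        rw [← Real.exp_sum]
        congr 1
        simp [dotProduct, Finset.mul_sum, sq]
    _ = |S.det|⁻¹ * (∫ t : ℝ, Real.exp (-(1/2) * t^2)) ^ (Fintype.card ι) := by
        rw [integral_fintype_prod_volume_eq_pow (ι := ι) (fun t : ℝ => Real.exp (-(1/2) * t^2))]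
    _ = Real.sqrt ((2 * π) ^ (Fintype.card ι) / P.det) := by
        have hg : ∫ t : ℝ, Real.exp (-(1/2) * t^2) = Real.sqrt (2 * π) := by
          have := integral_gaussian (1/2 : ℝ)
          simp only [neg_mul] at this ⊢
          rw [this]; congr 1; ring
        have hpow : Real.sqrt ((2 * π) ^ (Fintype.card ι)) = Real.sqrt (2 * π) ^ (Fintype.card ι) := by
          rw [show ((2*π):ℝ) ^ (Fintype.card ι) = (Real.sqrt (2*π) ^ (Fintype.card ι))^2 by
            rw [← pow_mul, mul_comm (Fintype.card ι) 2, pow_mul, Real.sq_sqrt (by positivity)]]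
          exact Real.sqrt_sq (pow_nonneg (Real.sqrt_nonneg _) _)
        rw [hg, ← hpow, ← Real.sqrt_sq_eq_abs, hdet2, Real.sqrt_div (by positivity), inv_mul_eq_div]

noncomputable def gK (S : Matrix ι ι ℝ) (x : ι → ℝ) : ℝ :=
  (Real.sqrt ((2 * π) ^ (Fintype.card ι) * S.det))⁻¹ *
    Real.exp (-(1 / 2) * (x ⬝ᵥ S⁻¹ *ᵥ x))

lemma continuous_gK (S : Matrix ι ι ℝ) : Continuous (gK S) :=
  continuous_const.mul (Real.continuous_exp.comp (continuous_const.mul (continuous_quad _)))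

lemma integral_gK (S : Matrix ι ι ℝ) (hS : S.PosDef) : ∫ x : ι → ℝ, gK S x = 1 := by
  unfold gK
  rw [MeasureTheory.integral_const_mul, integral_gaussian_posdef _ hS.inv,
    Matrix.det_nonsing_inv]
  rw [Ring.inverse_eq_inv', div_inv_eq_mul]
  exact inv_mul_cancel₀ (Real.sqrt_ne_zero'.mpr
    (mul_pos (pow_pos (by positivity) _) hS.det_pos))

lemma herm_t {M : Matrix ι ι ℝ} (h : M.IsHermitian) : Mᵀ = M := by
  exact (Matrix.isHermitian_iff_isSymm.mp h).eq

lemma herm_of_t {M : Matrix ι ι ℝ} (h : Mᵀ = M) : M.IsHermitian := by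
  exact Matrix.isHermitian_iff_isSymm.mpr h

lemma dot_symm {M : Matrix ι ι ℝ} (hM : Mᵀ = M) (x y : ι → ℝ) :
    x ⬝ᵥ M *ᵥ y = y ⬝ᵥ M *ᵥ x := by
  rw [Matrix.dotProduct_mulVec, ← Matrix.mulVec_transpose, hM, dotProduct_comm]

lemma gK_conv (S1 S2 : Matrix ι ι ℝ) (h1 : S1.PosDef) (h2 : S2.PosDef) (v : ι → ℝ) :
    ∫ x : ι → ℝ, gK S1 x * gK S2 (v - x) = gK (S1 + S2) v := by
  have hA : (S1⁻¹).PosDef := h1.inv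
  have hB : (S2⁻¹).PosDef := h2.inv
  have hT : (S1⁻¹ + S2⁻¹).PosDef := hA.add hB
  have h12 : (S1 + S2).PosDef := h1.add h2
  have hd1 : S1.det ≠ 0 := h1.det_pos.ne'
  have hd2 : S2.det ≠ 0 := h2.det_pos.ne'
  have hdT : (S1⁻¹ + S2⁻¹).det ≠ 0 := hT.det_pos.ne'
  have hd12 : (S1 + S2).det ≠ 0 := h12.det_pos.ne'
  have hu1 : IsUnit S1.det := isUnit_iff_ne_zero.mpr hd1
  have hu2 : IsUnit S2.det := isUnit_iff_ne_zero.mpr hd2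
  have huT : IsUnit (S1⁻¹ + S2⁻¹).det := isUnit_iff_ne_zero.mpr hdT
  have tB : (S2⁻¹)ᵀ = S2⁻¹ := herm_t hB.1
  have tT : (S1⁻¹ + S2⁻¹)ᵀ = S1⁻¹ + S2⁻¹ := herm_t hT.1
  set w := S2⁻¹ *ᵥ v with hwdef
  set m := (S1⁻¹ + S2⁻¹)⁻¹ *ᵥ w with hmdef
  have hTfact : S1⁻¹ + S2⁻¹ = S1⁻¹ * (S1 + S2) * S2⁻¹ := by
    rw [Matrix.mul_add, Matrix.add_mul, Matrix.nonsing_inv_mul S1 hu1, Matrix.one_mul,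
      Matrix.mul_assoc, Matrix.mul_nonsing_inv S2 hu2, Matrix.mul_one, add_comm]
  have hdetT : (S1⁻¹ + S2⁻¹).det = S1.det⁻¹ * (S1 + S2).det * S2.det⁻¹ := by
    rw [hTfact, Matrix.det_mul, Matrix.det_mul]
    simp [Matrix.det_nonsing_inv, Ring.inverse_eq_inv']
  have hTinvfact : (S1⁻¹ + S2⁻¹)⁻¹ = S2 * (S1 + S2)⁻¹ * S1 := by
    rw [hTfact, Matrix.mul_inv_rev, Matrix.mul_inv_rev,
      Matrix.nonsing_inv_nonsing_inv _ hu2, Matrix.nonsing_inv_nonsing_inv _ hu1,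
      Matrix.mul_assoc]
  have hinv12 : (S1 + S2)⁻¹ = S2⁻¹ - S2⁻¹ * (S1⁻¹ + S2⁻¹)⁻¹ * S2⁻¹ := by
    have h' : S2⁻¹ * (S1⁻¹ + S2⁻¹)⁻¹ * S1⁻¹ = (S1 + S2)⁻¹ := by
      rw [hTinvfact]
      rw [show S2⁻¹ * (S2 * (S1 + S2)⁻¹ * S1) * S1⁻¹
          = (S2⁻¹ * S2) * (S1 + S2)⁻¹ * (S1 * S1⁻¹) by noncomm_ring]
      rw [Matrix.nonsing_inv_mul S2 hu2, Matrix.mul_nonsing_inv S1 hu1, Matrix.one_mul,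
        Matrix.mul_one]
    rw [← h']
    have hstep : S2⁻¹ * (S1⁻¹ + S2⁻¹)⁻¹ * S1⁻¹
        = S2⁻¹ * (S1⁻¹ + S2⁻¹)⁻¹ * ((S1⁻¹ + S2⁻¹) - S2⁻¹) := by
      congr 1
      abel
    rw [hstep, Matrix.mul_sub, Matrix.mul_assoc S2⁻¹ _ _,
      Matrix.nonsing_inv_mul _ huT, Matrix.mul_one]
  -- quadratic identity
  have hTm : (S1⁻¹ + S2⁻¹) *ᵥ m = w := by
    rw [hmdef, Matrix.mulVec_mulVec, Matrix.mul_nonsing_inv _ huT, Matrix.one_mulVec]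
  have p2 : ∀ x : ι → ℝ, x ⬝ᵥ (S1⁻¹ + S2⁻¹) *ᵥ m = v ⬝ᵥ S2⁻¹ *ᵥ x := by
    intro x
    rw [hTm, hwdef, dot_symm tB]
  have p3 : ∀ x : ι → ℝ, m ⬝ᵥ (S1⁻¹ + S2⁻¹) *ᵥ x = v ⬝ᵥ S2⁻¹ *ᵥ x := by
    intro x
    rw [dot_symm tT, p2]
  have p4 : m ⬝ᵥ (S1⁻¹ + S2⁻¹) *ᵥ m = w ⬝ᵥ (S1⁻¹ + S2⁻¹)⁻¹ *ᵥ w := by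
    rw [hTm, hmdef, dotProduct_comm]
  have p5 : v ⬝ᵥ (S1 + S2)⁻¹ *ᵥ v = v ⬝ᵥ S2⁻¹ *ᵥ v - w ⬝ᵥ (S1⁻¹ + S2⁻¹)⁻¹ *ᵥ w := by
    rw [hinv12, Matrix.sub_mulVec, dotProduct_sub]
    congr 1
    rw [← Matrix.mulVec_mulVec, ← Matrix.mulVec_mulVec, ← hwdef, dot_symm tB,
      dotProduct_comm]
  have hquad : ∀ x : ι → ℝ,
      x ⬝ᵥ S1⁻¹ *ᵥ x + (v - x) ⬝ᵥ S2⁻¹ *ᵥ (v - x)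
        = v ⬝ᵥ (S1 + S2)⁻¹ *ᵥ v + (x - m) ⬝ᵥ (S1⁻¹ + S2⁻¹) *ᵥ (x - m) := by
    intro x
    have exp2 : (v - x) ⬝ᵥ S2⁻¹ *ᵥ (v - x)
        = v ⬝ᵥ S2⁻¹ *ᵥ v - 2 * (v ⬝ᵥ S2⁻¹ *ᵥ x) + x ⬝ᵥ S2⁻¹ *ᵥ x := by
      simp only [Matrix.mulVec_sub, sub_dotProduct, dotProduct_sub]
      rw [dot_symm tB x v]
      ring
    have exp4 : (x - m) ⬝ᵥ (S1⁻¹ + S2⁻¹) *ᵥ (x - m)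
        = x ⬝ᵥ S1⁻¹ *ᵥ x + x ⬝ᵥ S2⁻¹ *ᵥ x - 2 * (v ⬝ᵥ S2⁻¹ *ᵥ x)
          + w ⬝ᵥ (S1⁻¹ + S2⁻¹)⁻¹ *ᵥ w := by
      have p1 : x ⬝ᵥ (S1⁻¹ + S2⁻¹) *ᵥ x = x ⬝ᵥ S1⁻¹ *ᵥ x + x ⬝ᵥ S2⁻¹ *ᵥ x := by
        rw [Matrix.add_mulVec, dotProduct_add]
      simp only [Matrix.mulVec_sub, sub_dotProduct, dotProduct_sub]
      rw [p1, p2 x, p3 x, p4]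
      ring
    rw [exp2, exp4, p5]
    ring
  -- constant identity
  have hconst : (Real.sqrt ((2 * π) ^ (Fintype.card ι) * S1.det))⁻¹ *
      (Real.sqrt ((2 * π) ^ (Fintype.card ι) * S2.det))⁻¹
      = (Real.sqrt ((2 * π) ^ (Fintype.card ι) * (S1 + S2).det))⁻¹ *
        (Real.sqrt ((2 * π) ^ (Fintype.card ι) * ((S1⁻¹ + S2⁻¹)⁻¹).det))⁻¹ := by
    rw [← mul_inv, ← mul_inv,
      ← Real.sqrt_mul (mul_nonneg (by positivity) h1.det_pos.le),
      ← Real.sqrt_mul (mul_nonneg (by positivity) h12.det_pos.le)]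
    congr 2
    rw [Matrix.det_nonsing_inv, Ring.inverse_eq_inv', hdetT]
    field_simp
  -- pointwise identity
  have hpt : ∀ x : ι → ℝ, gK S1 x * gK S2 (v - x)
      = gK (S1 + S2) v * gK (S1⁻¹ + S2⁻¹)⁻¹ (x - m) := by
    intro x
    unfold gK
    rw [Matrix.nonsing_inv_nonsing_inv _ huT]
    conv_lhs => rw [mul_mul_mul_comm, ← Real.exp_add]
    conv_rhs => rw [mul_mul_mul_comm, ← Real.exp_add]
    rw [hconst]
    congr 2
    linarith [hquad x]
  simp_rw [hpt]
  rw [MeasureTheory.integral_const_mul, integral_sub_right_eq_self (gK (S1⁻¹ + S2⁻¹)⁻¹) m,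
    integral_gK _ hT.inv, mul_one]

end General

section Specific
variable {d : ℕ}

lemma expB_eq (τ : ℝ) : expB d τ = Matrix.fromBlocks 1 (τ • 1) 0 1 := by
  rw [expB, Bmat, ← Matrix.fromBlocks_one, Matrix.fromBlocks_smul, Matrix.fromBlocks_add]
  simp

lemma Cmat_eq (lam t : ℝ) : Cmat d lam t =
    Matrix.fromBlocks ((lam * (t ^ 3 / 3)) • 1) ((lam * (t ^ 2 / 2)) • 1)
      ((lam * (t ^ 2 / 2)) • 1) ((lam * t) • 1) := by
  rw [Cmat, Matrix.fromBlocks_smul]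
  simp [smul_smul]

lemma expB_mul (a b : ℝ) : expB d a * expB d b = expB d (a + b) := by
  rw [expB_eq, expB_eq, expB_eq, Matrix.fromBlocks_multiply]
  simp [add_smul]
  module

lemma expB_det (τ : ℝ) : (expB d τ).det = 1 := by
  rw [expB_eq, Matrix.det_fromBlocks_zero₂₁]
  simp

lemma expB_mulVec_mulVec (a b : ℝ) (x : Fin d ⊕ Fin d → ℝ) :
    expB d a *ᵥ (expB d b *ᵥ x) = expB d (a + b) *ᵥ x := by
  rw [Matrix.mulVec_mulVec, expB_mul]

lemma Cmat_semigroup (lam a b : ℝ) :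
    expB d b * Cmat d lam a * (expB d b)ᵀ + Cmat d lam b = Cmat d lam (a + b) := by
  rw [expB_eq, Cmat_eq, Cmat_eq, Cmat_eq, Matrix.fromBlocks_transpose,
    Matrix.fromBlocks_multiply, Matrix.fromBlocks_multiply, Matrix.fromBlocks_add]
  simp [Matrix.smul_mul, Matrix.mul_smul, smul_smul, ← add_smul, Matrix.transpose_smul]
  refine ⟨?_, ?_, ?_, ?_⟩ <;> (congr 1; ring)

lemma quad_term_nonneg {lam t u v : ℝ} (hlam : 0 < lam) (ht : 0 < t) :
    0 ≤ lam * (t^3/3) * u^2 + 2 * (lam * (t^2/2)) * (u*v) + lam * t * v^2 := by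
  nlinarith [mul_nonneg (mul_nonneg hlam.le ht.le) (sq_nonneg (t*u + 2*v)),
    mul_nonneg (mul_nonneg hlam.le (mul_nonneg ht.le (mul_nonneg ht.le ht.le))) (sq_nonneg u)]

lemma quad_term_pos {lam t u v : ℝ} (hlam : 0 < lam) (ht : 0 < t) (h : u ≠ 0 ∨ v ≠ 0) :
    0 < lam * (t^3/3) * u^2 + 2 * (lam * (t^2/2)) * (u*v) + lam * t * v^2 := by
  rcases eq_or_ne u 0 with hu | hu
  · have hv : v ≠ 0 := h.resolve_left (not_not_intro hu)
    have h2 : 0 < v^2 := by positivity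
    subst hu
    nlinarith [mul_pos (mul_pos hlam ht) h2]
  · have h2 : 0 < u^2 := by positivity
    nlinarith [mul_nonneg (mul_nonneg hlam.le ht.le) (sq_nonneg (t*u + 2*v)),
      mul_pos (mul_pos hlam (mul_pos ht (mul_pos ht ht))) h2]

lemma dot_sum_elim {d : ℕ} (P Q : Fin d → ℝ) (x : Fin d ⊕ Fin d → ℝ) :
    x ⬝ᵥ Sum.elim P Q = (x ∘ Sum.inl) ⬝ᵥ P + (x ∘ Sum.inr) ⬝ᵥ Q := by
  simp [dotProduct, Fintype.sum_sum_type]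

lemma Cmat_posDef (lam t : ℝ) (hlam : 0 < lam) (ht : 0 < t) : (Cmat d lam t).PosDef := by
  rw [Matrix.posDef_iff_dotProduct_mulVec]
  constructor
  · rw [Matrix.IsHermitian, Cmat_eq]
    simp [Matrix.fromBlocks_conjTranspose, Matrix.fromBlocks_transpose, Matrix.transpose_smul]
  · intro x hx
    have hsx : star x = x := by simp
    rw [hsx, Cmat_eq, Matrix.fromBlocks_mulVec, dot_sum_elim]
    simp only [Matrix.smul_mulVec, Matrix.one_mulVec, dotProduct,
      Pi.add_apply, Pi.smul_apply, smul_eq_mul, Function.comp_apply]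
    rw [← Finset.sum_add_distrib]
    obtain ⟨j, hj⟩ := Function.ne_iff.mp hx
    refine Finset.sum_pos' (fun i _ => ?_) ?_
    · have h := quad_term_nonneg (lam := lam) (t := t) (u := x (Sum.inl i))
        (v := x (Sum.inr i)) hlam ht
      nlinarith [h]
    · rcases j with i | i
      · refine ⟨i, Finset.mem_univ i, ?_⟩
        have h := quad_term_pos (lam := lam) (t := t) (u := x (Sum.inl i))
          (v := x (Sum.inr i)) hlam ht (Or.inl hj)
        nlinarith [h]
      · refine ⟨i, Finset.mem_univ i, ?_⟩
        have h := quad_term_pos (lam := lam) (t := t) (u := x (Sum.inl i))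
          (v := x (Sum.inr i)) hlam ht (Or.inr hj)
        nlinarith [h]

lemma posDef_congr {ι : Type*} [Fintype ι] [DecidableEq ι] {A M : Matrix ι ι ℝ}
    (hA : A.PosDef) (hM : IsUnit M.det) : (M * A * Mᵀ).PosDef := by
  have tA : Aᵀ = A := herm_t hA.1
  rw [Matrix.posDef_iff_dotProduct_mulVec]
  constructor
  · apply herm_of_t
    rw [Matrix.transpose_mul, Matrix.transpose_mul, Matrix.transpose_transpose, tA,
      Matrix.mul_assoc]
  · intro x hx
    have hMt : IsUnit (Mᵀ).det := by rwa [Matrix.det_transpose]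
    have hxM : Mᵀ *ᵥ x ≠ 0 := by
      intro h0
      exact hx ((Matrix.mulVec_injective_iff_isUnit.mpr ((Matrix.isUnit_iff_isUnit_det _).mpr hMt)) (by simpa using h0))
    have hpos := hA.dotProduct_mulVec_pos hxM
    have hsx : star x = x := by simp
    have hs2 : star (Mᵀ *ᵥ x) = Mᵀ *ᵥ x := by simp
    rw [hs2] at hpos
    rw [hsx, ← Matrix.mulVec_mulVec, ← Matrix.mulVec_mulVec, Matrix.dotProduct_mulVec x,
      ← Matrix.mulVec_transpose]
    exact hpos

lemma gK_congr {ι : Type*} [Fintype ι] [DecidableEq ι] (M S : Matrix ι ι ℝ)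
    (hdet : M.det = 1) (x : ι → ℝ) : gK (M * S * Mᵀ) x = gK S (M⁻¹ *ᵥ x) := by
  unfold gK
  have hdet2 : (M * S * Mᵀ).det = S.det := by
    rw [Matrix.det_mul, Matrix.det_mul, Matrix.det_transpose, hdet]
    ring
  have hinv : (M * S * Mᵀ)⁻¹ = (M⁻¹)ᵀ * (S⁻¹ * M⁻¹) := by
    rw [Matrix.mul_inv_rev, Matrix.mul_inv_rev, Matrix.transpose_nonsing_inv]
  rw [hdet2, hinv]
  congr 3
  rw [← Matrix.mulVec_mulVec, Matrix.dotProduct_mulVec x, ← Matrix.mulVec_transpose,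
    Matrix.transpose_transpose, Matrix.mulVec_mulVec]

lemma expB_zero : expB d 0 = 1 := by
  simp [expB]

lemma expB_inv (b : ℝ) : (expB d b)⁻¹ = expB d (-b) := by
  apply Matrix.inv_eq_right_inv
  rw [expB_mul, add_neg_cancel, expB_zero]

lemma ker_eq_gK (lam s t : ℝ) (z y : Fin d ⊕ Fin d → ℝ) :
    ker d lam s t z y = gK (Cmat d lam (t - s)) (y - expB d (t - s) *ᵥ z) := by
  unfold ker gK
  rw [show Fintype.card (Fin d ⊕ Fin d) = 2 * d by simp [two_mul]]

end Specific

/-- Chapman–Kolmogorov identity for the Gaussian kernel: for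
`s < τ < t`, `∫ P^λ(s,z;τ,η) P^λ(τ,η;t,y) dη = P^λ(s,z;t,y)`. -/
theorem stmt10 (d : ℕ) (hd : 1 ≤ d) (lam s τ t : ℝ) (hlam : 0 < lam)
    (hsτ : s < τ) (hτt : τ < t) (z y : Fin d ⊕ Fin d → ℝ) :
    ∫ η : Fin d ⊕ Fin d → ℝ, ker d lam s τ z η * ker d lam τ t η y =
      ker d lam s t z y := by
  have ha : (0:ℝ) < τ - s := sub_pos.mpr hsτ
  have hb : (0:ℝ) < t - τ := sub_pos.mpr hτt
  set a := τ - s with hadef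
  set b := t - τ with hbdef
  have hab : t - s = a + b := by rw [hadef, hbdef]; ring
  have hCa : (Cmat d lam a).PosDef := Cmat_posDef lam a hlam ha
  have hCb : (Cmat d lam b).PosDef := Cmat_posDef lam b hlam hb
  have hdetE : (expB d b).det = 1 := expB_det b
  have hE : IsUnit (expB d b).det := by rw [hdetE]; exact isUnit_one
  have hSig : (expB d b * Cmat d lam a * (expB d b)ᵀ).PosDef := posDef_congr hCa hE
  set m : Fin d ⊕ Fin d → ℝ := expB d (a + b) *ᵥ z with hmdef
  set F : (Fin d ⊕ Fin d → ℝ) → ℝ := fun wv =>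
    gK (expB d b * Cmat d lam a * (expB d b)ᵀ) (wv - m) * gK (Cmat d lam b) (y - wv) with hFdef
  have hFcont : Continuous F := by
    apply Continuous.mul
    · exact (continuous_gK _).comp (continuous_id.sub continuous_const)
    · exact (continuous_gK _).comp (continuous_const.sub continuous_id)
  have hback : ∀ u : Fin d ⊕ Fin d → ℝ,
      gK (expB d b * Cmat d lam a * (expB d b)ᵀ) (expB d b *ᵥ u) = gK (Cmat d lam a) u := by
    intro u
    rw [gK_congr _ _ hdetE, expB_inv, Matrix.mulVec_mulVec, expB_mul, neg_add_cancel,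
      expB_zero, Matrix.one_mulVec]
  have hpt : ∀ η : Fin d ⊕ Fin d → ℝ,
      ker d lam s τ z η * ker d lam τ t η y = F (expB d b *ᵥ η) := by
    intro η
    have harg : expB d b *ᵥ η - m = expB d b *ᵥ (η - expB d a *ᵥ z) := by
      rw [Matrix.mulVec_sub, Matrix.mulVec_mulVec, expB_mul, add_comm b a, hmdef]
    rw [ker_eq_gK, ker_eq_gK, hFdef]
    simp only
    rw [harg, hback]
  calc ∫ η : Fin d ⊕ Fin d → ℝ, ker d lam s τ z η * ker d lam τ t η y
      = ∫ η : Fin d ⊕ Fin d → ℝ, F (expB d b *ᵥ η) := by simp_rw [hpt]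
    _ = |(expB d b).det|⁻¹ * ∫ wv, F wv := integral_comp_mulVec _ (by rw [hdetE]; exact one_ne_zero) _ hFcont
    _ = ∫ wv, F wv := by rw [hdetE]; simp
    _ = ∫ x' : Fin d ⊕ Fin d → ℝ, gK (expB d b * Cmat d lam a * (expB d b)ᵀ) x' *
          gK (Cmat d lam b) ((y - m) - x') := by
        rw [← integral_sub_right_eq_self (fun x' => gK (expB d b * Cmat d lam a * (expB d b)ᵀ) x' *
          gK (Cmat d lam b) ((y - m) - x')) m]
        apply integral_congr_ae
        filter_upwards with wv
        have h2 : y - m - (wv - m) = y - wv := by abel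
        simp only [hFdef]
        simp only [h2]
    _ = gK (expB d b * Cmat d lam a * (expB d b)ᵀ + Cmat d lam b) (y - m) :=
        gK_conv _ _ hSig hCb _
    _ = ker d lam s t z y := by
        rw [Cmat_semigroup, ker_eq_gK, hab, hmdef]
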